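/- Let R = F_2[x^{±1}, y^{±1}] with antipode f ↦ f̄, let Λ = [[0,I_2],[I_2,0]], let σ be the toric-code stabilizer matrix with columns (1+x^{-1}, 1+y^{-1}, 0, 0)^T and (0, 0, 1+y, 1+x)^T, and let u = x^a y^b be any monomial with S_u = [[0, u],[u^{-1}, 0]]. Then there exists no 4×4 matrix Q over R satisfying simultaneously Q†ΛQ = Λ, Q^2 = I_4, and Q·σ = σ·S_u. -/

import Mathlib

open AddMonoidAlgebra

/-- The Laurent polynomial ring `R = F₂[x^{±1}, y^{±1}]`, realized as the group algebra
of `ℤ × ℤ` over `F₂`; the monomial `x^a y^b` corresponds to `single (a, b) 1`. -/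
abbrev R2 : Type := AddMonoidAlgebra (ZMod 2) (ℤ × ℤ)

/-- The monomial `x^a y^b` in `R2`. -/
noncomputable def mono (a b : ℤ) : R2 := AddMonoidAlgebra.single (a, b) 1

/-- The antipode map `x ↦ x⁻¹`, `y ↦ y⁻¹`, the `F₂`-algebra involution induced by
negation on the exponent group `ℤ × ℤ`. -/
noncomputable def bar (f : R2) : R2 :=
  AddMonoidAlgebra.domCongr (ZMod 2) (ZMod 2) (AddEquiv.neg (ℤ × ℤ)) f

/-- Antipode-transpose (`†`) of a matrix over `R2`. -/
noncomputable def dag {α β : Type*} (M : Matrix α β R2) : Matrix β α R2 :=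
  (M.map bar).transpose

/-- The toric-code stabilizer matrix `σ` (columns: vertex and plaquette stabilizers). -/
noncomputable def sigmaTC : Matrix (Fin 4) (Fin 2) R2 :=
  !![1 + mono (-1) 0, 0;
     1 + mono 0 (-1), 0;
     0, 1 + mono 0 1;
     0, 1 + mono 1 0]

/-- The symplectic form `Λ = [[0, I₂], [I₂, 0]]`. -/
noncomputable def Lam : Matrix (Fin 4) (Fin 4) R2 :=
  !![0, 0, 1, 0;
     0, 0, 0, 1;
     1, 0, 0, 0;
     0, 1, 0, 0]

/-! From `Q†ΛQ = Λ` and `Q² = 1` we get `Q†Λ = ΛQ`, so `B = Q₀₂` and `D = Q₁₃` are fixed by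
the antipode and `Q₀₃ = bar Q₁₂`. Adding the `(0,1)` entry of `Qσ = σS_u` times `1 + ȳ` to the
antipode of its `(1,1)` entry times `1 + x` eliminates `Q₀₃` and leaves, in characteristic 2,
`B (y + ȳ) + D (x + x̄) = v + v̄` with `v = (1 + x̄)(1 + ȳ) u`.
The functional `f ↦ ∑ f_{ij}` over `i, j` odd with `j > 0` kills the left side: after multiplying
by `x + x̄` every column of even `i` is counted twice, and after multiplying by `y + ȳ` only the
coefficients `B_{i0}` with `i` odd survive, which cancel in pairs `±i` because `B` is self-dual.
On the right side it is `1`: `v` and `v̄` each have one monomial with both exponents odd, namely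
`x^p y^q` and `x^{-p} y^{-q}`, and exactly one of `q, -q` is positive. -/

instance : CharP R2 2 := charP_of_injective_algebraMap' (ZMod 2) 2

lemma bar_add (f g : R2) : bar (f + g) = bar f + bar g := by simp [bar]

lemma bar_mul (f g : R2) : bar (f * g) = bar f * bar g := by simp [bar]

lemma bar_one : bar 1 = 1 := by simp [bar]

lemma bar_single (m : ℤ × ℤ) (c : ZMod 2) : bar (single m c) = single (-m) c := by simp [bar]

lemma bar_mono (s t : ℤ) : bar (mono s t) = mono (-s) (-t) := bar_single _ _

lemma mono_mul_mono (s t s' t' : ℤ) : mono s t * mono s' t' = mono (s + s') (t + t') := by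
  simp [mono, single_mul_single]

lemma mono_mul_mono_neg (s t : ℤ) : mono s t * mono (-s) (-t) = 1 := by
  rw [mono_mul_mono, add_neg_cancel, add_neg_cancel]; rfl

lemma mul_eq_mul_of_mul_mul_eq {M : Type*} [Monoid M] {a l q : M} (h : a * l * q = l)
    (hq : q * q = 1) : a * l = l * q := by
  calc a * l = a * l * (q * q) := by rw [hq, mul_one]
    _ = l * q := by rw [← mul_assoc, h]

section Entries

variable {Q : Matrix (Fin 4) (Fin 4) R2}

lemma bar_entries_of_dag_mul_Lam (h : dag Q * Lam = Lam * Q) :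
    bar (Q 0 2) = Q 0 2 ∧ bar (Q 1 3) = Q 1 3 ∧ bar (Q 1 2) = Q 0 3 := by
  have entry (i j : Fin 4) := congrFun (congrFun h i) j
  simp only [Matrix.mul_apply, Fin.sum_univ_four, Lam, dag] at entry
  refine ⟨?_, ?_, ?_⟩
  · simpa using entry 2 2
  · simpa using entry 3 3
  · simpa using entry 2 3

lemma entries_of_mul_sigmaTC {u u' : R2} (h : Q * sigmaTC = sigmaTC * !![0, u; u', 0]) :
    Q 0 2 * (1 + mono 0 1) + Q 0 3 * (1 + mono 1 0) = (1 + mono (-1) 0) * u ∧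
    Q 1 2 * (1 + mono 0 1) + Q 1 3 * (1 + mono 1 0) = (1 + mono 0 (-1)) * u := by
  have entry (i : Fin 4) := congrFun (congrFun h i) 1
  simp only [Matrix.mul_apply, Fin.sum_univ_four, Fin.sum_univ_two, sigmaTC] at entry
  exact ⟨by simpa using entry 0, by simpa using entry 1⟩

end Entries

lemma stabilizer_relation {B C C' D u : R2} (hC : bar C' = C) (hD : bar D = D)
    (h₁ : B * (1 + mono 0 1) + C * (1 + mono 1 0) = (1 + mono (-1) 0) * u)
    (h₂ : C' * (1 + mono 0 1) + D * (1 + mono 1 0) = (1 + mono 0 (-1)) * u) :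
    B * (mono 0 1 + mono 0 (-1)) + D * (mono 1 0 + mono (-1) 0) =
      (1 + mono (-1) 0) * (1 + mono 0 (-1)) * u + (1 + mono 1 0) * (1 + mono 0 1) * bar u := by
  have h₂' : C * (1 + mono 0 (-1)) + D * (1 + mono (-1) 0) = (1 + mono 0 1) * bar u := by
    simpa [bar_add, bar_mul, bar_one, bar_mono, hC, hD] using congrArg bar h₂
  have hy : mono 0 1 * mono 0 (-1) = 1 := mono_mul_mono_neg 0 1
  have hx : mono 1 0 * mono (-1) 0 = 1 := mono_mul_mono_neg 1 0
  linear_combination (1 + mono 0 (-1)) * h₁ + (1 + mono 1 0) * h₂' - B * hy - D * hx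
    - (B + D + C * (1 + mono 1 0) * (1 + mono 0 (-1))) * CharTwo.two_eq_zero (R := R2)

def weightSum (χ : ℤ × ℤ → ZMod 2) (f : R2) : ZMod 2 :=
  f.coeff.sum fun m c => χ m * c

section WeightSum

variable (χ χ' : ℤ × ℤ → ZMod 2)

lemma weightSum_zero : weightSum χ 0 = 0 := by simp [weightSum]

lemma weightSum_add (f g : R2) : weightSum χ (f + g) = weightSum χ f + weightSum χ g := by
  classical
  unfold weightSum; rw [coeff_add]
  exact Finsupp.sum_add_index' (fun _ => by simp) (fun _ _ _ => by simp [mul_add])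

lemma weightSum_single (m : ℤ × ℤ) (c : ZMod 2) : weightSum χ (single m c) = χ m * c := by
  classical
  unfold weightSum; rw [coeff_single]
  exact Finsupp.sum_single_index (by simp)

lemma weightSum_mono (s t : ℤ) : weightSum χ (mono s t) = χ (s, t) := by
  rw [mono, weightSum_single, mul_one]

lemma weightSum_add_weight (f : R2) :
    weightSum (χ + χ') f = weightSum χ f + weightSum χ' f := by
  classical
  simp [weightSum, ← Finsupp.sum_add, add_mul]

lemma weightSum_mul_mono (s t : ℤ) (f : R2) :
    weightSum χ (f * mono s t) = weightSum (fun m => χ (m + (s, t))) f := by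
  induction f using induction_linear with
  | zero => rw [zero_mul, weightSum_zero, weightSum_zero]
  | add f g hf hg => rw [add_mul, weightSum_add, weightSum_add, hf, hg]
  | single m c => rw [mono, single_mul_single, mul_one, weightSum_single, weightSum_single]

lemma weightSum_bar (f : R2) : weightSum χ (bar f) = weightSum (fun m => χ (-m)) f := by
  induction f using induction_linear with
  | zero => rw [show bar 0 = 0 by simp [bar], weightSum_zero, weightSum_zero]
  | add f g hf hg => rw [bar_add, weightSum_add, weightSum_add, hf, hg]
  | single m c => rw [bar_single, weightSum_single, weightSum_single]

lemma weightSum_symmetrize_eq_zero {f : R2} (hf : bar f = f) :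
    weightSum (fun m => χ m + χ (-m)) f = 0 := by
  rw [show (fun m => χ m + χ (-m)) = χ + fun m => χ (-m) from rfl, weightSum_add_weight,
    ← weightSum_bar, hf, CharTwo.add_self_eq_zero]

end WeightSum

def posOdd (j : ℤ) : ZMod 2 := if 0 < j then (j : ZMod 2) else 0

lemma posOdd_add_posOdd_neg (j : ℤ) : posOdd j + posOdd (-j) = j := by
  unfold posOdd
  split_ifs
  · omega
  · simp
  · push_cast; rw [zero_add, CharTwo.neg_eq]
  · simp [show j = 0 by omega]

lemma posOdd_add_one_add_posOdd_sub_one (j : ℤ) :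
    posOdd (j + 1) + posOdd (j - 1) = if j = 0 then 1 else 0 := by
  rcases (by omega : j < 0 ∨ j = 0 ∨ j = 1 ∨ 1 < j) with h | rfl | rfl | h
  · simp only [posOdd, show ¬0 < j + 1 by omega, show ¬0 < j - 1 by omega, h.ne, if_false,
      add_zero]
  · decide
  · decide
  · simp only [posOdd, show 0 < j + 1 by omega, show 0 < j - 1 by omega, if_true,
      show j ≠ 0 by omega, if_false]
    push_cast; ring_nf; reduce_mod_char

/-- The indicator of `{(i, j) | i, j odd, j > 0}`; the cast `ℤ → ZMod 2` is the parity. -/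
def oddUpperWeight (m : ℤ × ℤ) : ZMod 2 := m.1 * posOdd m.2

def oddAxisWeight (m : ℤ × ℤ) : ZMod 2 := posOdd m.1 * if m.2 = 0 then 1 else 0

lemma oddUpperWeight_add_horizontal (m : ℤ × ℤ) :
    oddUpperWeight (m + (1, 0)) + oddUpperWeight (m + (-1, 0)) = 0 := by
  simp only [oddUpperWeight, Prod.fst_add, Prod.snd_add, add_zero, ← add_mul]
  push_cast; ring_nf; reduce_mod_char

lemma oddUpperWeight_add_vertical (m : ℤ × ℤ) :
    oddUpperWeight (m + (0, 1)) + oddUpperWeight (m + (0, -1)) =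
      oddAxisWeight m + oddAxisWeight (-m) := by
  simp only [oddUpperWeight, oddAxisWeight, Prod.fst_add, Prod.snd_add, add_zero, ← mul_add,
    Prod.fst_neg, Prod.snd_neg, neg_eq_zero, ← add_mul, posOdd_add_posOdd_neg, ← sub_eq_add_neg,
    posOdd_add_one_add_posOdd_sub_one]

lemma one_add_mono_mul_one_add_mono_mul_mono (e d s t : ℤ) :
    (1 + mono e 0) * (1 + mono 0 d) * mono s t =
      mono s t + mono (s + e) t + (mono s (t + d) + mono (s + e) (t + d)) := by
  simp only [add_mul, mul_add, one_mul, mul_one, mono_mul_mono, zero_add, add_zero]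
  ring_nf

lemma weightSum_oddUpper_mul_vertical_of_bar_eq {B : R2} (hB : bar B = B) :
    weightSum oddUpperWeight (B * (mono 0 1 + mono 0 (-1))) = 0 := by
  rw [mul_add, weightSum_add, weightSum_mul_mono, weightSum_mul_mono, ← weightSum_add_weight]
  exact (congrArg (weightSum · B) (funext oddUpperWeight_add_vertical)).trans
    (weightSum_symmetrize_eq_zero _ hB)

lemma weightSum_oddUpper_mul_horizontal (D : R2) :
    weightSum oddUpperWeight (D * (mono 1 0 + mono (-1) 0)) = 0 := by
  rw [mul_add, weightSum_add, weightSum_mul_mono, weightSum_mul_mono, ← weightSum_add_weight]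
  simp only [Pi.add_def, oddUpperWeight_add_horizontal]
  simp [weightSum]

lemma weightSum_oddUpper_plaquette (e d s t : ℤ) :
    weightSum oddUpperWeight ((1 + mono e 0) * (1 + mono 0 d) * mono s t) =
      ((s + (s + e) : ℤ) : ZMod 2) * (posOdd t + posOdd (t + d)) := by
  simp only [one_add_mono_mul_one_add_mono_mul_mono, weightSum_add, weightSum_mono,
    oddUpperWeight]
  push_cast; ring

lemma weightSum_oddUpper_stabilizer_rhs (a b : ℤ) :
    weightSum oddUpperWeight ((1 + mono (-1) 0) * (1 + mono 0 (-1)) * mono a b +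
      (1 + mono 1 0) * (1 + mono 0 1) * bar (mono a b)) = 1 := by
  rw [weightSum_add, bar_mono, weightSum_oddUpper_plaquette, weightSum_oddUpper_plaquette]
  have hodd (s e : ℤ) (he : e = 1 ∨ e = -1) : ((s + (s + e) : ℤ) : ZMod 2) = 1 := by
    rcases he with rfl | rfl <;> push_cast <;> ring_nf <;> reduce_mod_char
  rw [hodd _ _ (.inr rfl), hodd _ _ (.inl rfl), one_mul, one_mul, add_add_add_comm,
    posOdd_add_posOdd_neg, show -b + 1 = -(b + -1) by ring, posOdd_add_posOdd_neg]
  push_cast; ring_nf; reduce_mod_char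

/-- Main theorem, `l = 1` case: there is no strictly translation-invariant Clifford
`ℤ₂` symmetry exchanging the electric and magnetic stabilizers of the toric code. -/
theorem no_Z2_clifford_em_duality (a b : ℤ) :
    ¬ ∃ Q : Matrix (Fin 4) (Fin 4) R2,
        dag Q * Lam * Q = Lam ∧
        Q * Q = 1 ∧
        Q * sigmaTC = sigmaTC * !![0, mono a b; mono (-a) (-b), 0] := by
  rintro ⟨Q, hsympl, hinv, hstab⟩
  obtain ⟨hB, hD, hC⟩ := bar_entries_of_dag_mul_Lam (mul_eq_mul_of_mul_mul_eq hsympl hinv)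
  obtain ⟨h₁, h₂⟩ := entries_of_mul_sigmaTC hstab
  have key := congrArg (weightSum oddUpperWeight) (stabilizer_relation hC hD h₁ h₂)
  rw [weightSum_add, weightSum_oddUpper_mul_vertical_of_bar_eq hB,
    weightSum_oddUpper_mul_horizontal, add_zero, weightSum_oddUpper_stabilizer_rhs] at key
  exact zero_ne_one key
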